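/- Let ν be an infinite regular cardinal with ν^{<ν} = ν and let A ⊆ ν^ν. Player I has a winning strategy in the Banach–Mazur game G_ν(A) if and only if there is a dense homomorphism f : ν^{<ν} → ν^{<ν} with ran(f*) ⊆ A. -/

import Mathlib

universe u

noncomputable section

/-! ## Sequences of ordinals

`SeqLT o v` is the set `v^{<o}` of all sequences of ordinals `< v` of length `< o`
(for `o > 0`; values beyond the length are normalized to `0`).
`SeqFull o v` is the generalized Baire space `v^o` of all functions from ordinals `< o`
to ordinals `< v`. -/

/-- An element of `v^{<o}`: a sequence of ordinals `< v` of length `< o`. -/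
structure SeqLT (o v : Ordinal.{u}) : Type (u + 1) where
  len : Ordinal.{u}
  len_lt : len < o ⊔ 1
  val : Ordinal.{u} → Ordinal.{u}
  val_lt : ∀ β, β < len → val β < v
  val_zero : ∀ β, len ≤ β → val β = 0

namespace SeqLT

variable {o v : Ordinal.{u}}

/-- `s ⊆ t`, i.e. `t` end-extends `s`. -/
protected def le (s t : SeqLT o v) : Prop :=
  s.len ≤ t.len ∧ ∀ β, β < s.len → s.val β = t.val β

/-- `s ⊊ t`, i.e. `t` properly end-extends `s`. -/
protected def slt (s t : SeqLT o v) : Prop :=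
  s.le t ∧ s.len < t.len

/-- The empty sequence. -/
protected def empty (o v : Ordinal.{u}) : SeqLT o v where
  len := 0
  len_lt := lt_sup_iff.mpr (Or.inr zero_lt_one)
  val := fun _ => 0
  val_lt := fun β h => absurd h (not_lt_of_ge (zero_le : (0 : Ordinal.{u}) ≤ β))
  val_zero := fun _ _ => rfl

/-- `s⌢⟨β⟩`: the sequence `s` extended by the single value `β`. -/
def snoc (s : SeqLT o v) (β : Ordinal.{u}) : SeqLT o v :=
  if h : s.len + 1 < o ⊔ 1 ∧ β < v then
    { len := s.len + 1
      len_lt := h.1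
      val := fun γ => if γ = s.len then β else s.val γ
      val_lt := fun γ hγ => by
        rcases eq_or_ne γ s.len with rfl | hne
        · simpa using h.2
        · simp only [if_neg hne]
          refine s.val_lt γ (lt_of_le_of_ne ?_ hne)
          rw [Ordinal.add_one_eq_succ] at hγ
          exact Order.lt_succ_iff.mp hγ
      val_zero := fun γ hγ => by
        have h1 : s.len < γ :=
          lt_of_lt_of_le (by rw [Ordinal.add_one_eq_succ]; exact Order.lt_succ s.len) hγ
        simp only [if_neg h1.ne']
        exact s.val_zero γ h1.le }
  else s

protected theorem le_refl (s : SeqLT o v) : s.le s :=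
  ⟨le_rfl, fun _ _ => rfl⟩

protected theorem le_trans {s t u : SeqLT o v} (h1 : s.le t) (h2 : t.le u) : s.le u :=
  ⟨h1.1.trans h2.1, fun β hβ => (h1.2 β hβ).trans (h2.2 β (lt_of_lt_of_le hβ h1.1))⟩

end SeqLT

/-- An element of the generalized Baire space `v^o`. -/
structure SeqFull (o v : Ordinal.{u}) : Type (u + 1) where
  val : Ordinal.{u} → Ordinal.{u}
  val_lt : ∀ β, β < o → val β < v
  val_zero : ∀ β, o ≤ β → val β = 0

/-- The restriction `x ↾ β` of `x : v^o` to an ordinal `β < o`. -/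
def SeqFull.res {o v : Ordinal.{u}} (x : SeqFull o v) (β : Ordinal.{u}) : SeqLT o v :=
  if h : β < o ⊔ 1 then
    { len := β
      len_lt := h
      val := fun γ => if γ < β then x.val γ else 0
      val_lt := fun γ hγ => by
        simp only [if_pos hγ]
        rcases lt_sup_iff.mp h with h' | h'
        · exact x.val_lt γ (hγ.trans h')
        · rw [Ordinal.lt_one_iff_zero] at h'
          exact absurd (h' ▸ hγ) (not_lt_of_ge (zero_le : (0 : Ordinal.{u}) ≤ γ))
      val_zero := fun γ hγ => if_neg (not_lt.mpr hγ) }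
  else SeqLT.empty o v

/-- `s ⊆ x`: the sequence `s` is an initial segment of `x : v^o`. -/
def SeqLT.prefixOf {o v : Ordinal.{u}} (s : SeqLT o v) (x : SeqFull o v) : Prop :=
  ∀ β, β < s.len → s.val β = x.val β

/-! ## The bounded topology -/

/-- The basic open set `N_t`. -/
def basicOpen {o v : Ordinal.{u}} (t : SeqLT o v) : Set (SeqFull o v) :=
  {x | t.prefixOf x}

/-- The bounded (standard) topology on the generalized Baire space, generated by the
basic open sets `N_t`. -/
instance (o v : Ordinal.{u}) : TopologicalSpace (SeqFull o v) :=
  TopologicalSpace.generateFrom {U | ∃ t : SeqLT o v, U = basicOpen t}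

/-- `A` is a nowhere dense subset of `B` (in the subspace topology on `B`). -/
def NowhereDenseIn {o v : Ordinal.{u}} (A B : Set (SeqFull o v)) : Prop :=
  A ⊆ B ∧ interior (closure {x : ↥B | (x : SeqFull o v) ∈ A}) = ∅

/-- `A` is `o`-meager in `B`: `A ∩ B` is the union of (card of) `o` many nowhere dense
subsets of `B`. -/
def MeagerIn {o v : Ordinal.{u}} (A B : Set (SeqFull o v)) : Prop :=
  ∃ F : {β : Ordinal.{u} // β < o} → Set (SeqFull o v),
    (∀ i, NowhereDenseIn (F i) B) ∧ A ∩ B = ⋃ i, F i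

/-- `A` is comeager in `B`: `B \ A` is meager in `B`. -/
def ComeagerIn {o v : Ordinal.{u}} (A B : Set (SeqFull o v)) : Prop :=
  MeagerIn (B \ A) B

/-- `A` has the `o`-Baire property: for some open `U`, `A △ U` is meager. -/
def BaireSet {o v : Ordinal.{u}} (A : Set (SeqFull o v)) : Prop :=
  ∃ U : Set (SeqFull o v), IsOpen U ∧ MeagerIn (symmDiff A U) Set.univ

/-! ## Homomorphisms of `v^{<o}` -/

/-- A homomorphism: strictly extension-preserving map of `v^{<o}` to itself. -/
def IsHom {o v : Ordinal.{u}} (f : SeqLT o v → SeqLT o v) : Prop :=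
  ∀ s t : SeqLT o v, s.slt t → (f s).slt (f t)

/-- `f` is dense: for every `s` and every `t ⊇ f(s)` there is `β < v` with
`f(s⌢⟨β⟩) ⊇ t`. -/
def IsDenseMap {o v : Ordinal.{u}} (f : SeqLT o v → SeqLT o v) : Prop :=
  ∀ s t : SeqLT o v, (f s).le t → ∃ β, β < v ∧ t.le (f (s.snoc β))

/-- `u = ⋃_{α<γ} s α` for a chain `s`. -/
def IsUnionOfChain {o v : Ordinal.{u}} (u : SeqLT o v) (γ : Ordinal.{u})
    (s : Ordinal.{u} → SeqLT o v) : Prop :=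
  (∀ α, α < γ → (s α).le u) ∧ ∀ β, β < u.len → ∃ α, α < γ ∧ β < (s α).len

/-- `f` is continuous: for every limit `γ < o` and every strictly increasing sequence
`⟨s_α : α < γ⟩`, `f(⋃_{α<γ} s_α) = ⋃_{α<γ} f(s_α)`. -/
def IsContinuousMap {o v : Ordinal.{u}} (f : SeqLT o v → SeqLT o v) : Prop :=
  ∀ γ : Ordinal.{u}, Order.IsSuccLimit γ → γ < o →
    ∀ s : Ordinal.{u} → SeqLT o v, (∀ α β, α < β → β < γ → (s α).slt (s β)) →
      ∀ u : SeqLT o v, IsUnionOfChain u γ s → IsUnionOfChain (f u) γ fun α => f (s α)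

/-- `y = f*(x) = ⋃_{α<o} f(x↾α)` for a homomorphism `f`. -/
def FStarVal {o v : Ordinal.{u}} (f : SeqLT o v → SeqLT o v) (x y : SeqFull o v) : Prop :=
  (∀ α, α < o → (f (x.res α)).prefixOf y) ∧
    ∀ β, β < o → ∃ α, α < o ∧ β < (f (x.res α)).len

/-! ## Clubs and the almost Baire property -/

/-- `C` is a club (closed unbounded set) in the ordinal `o`. -/
def IsClubIn (C : Set Ordinal.{u}) (o : Ordinal.{u}) : Prop :=
  (∀ γ ∈ C, γ < o) ∧ (∀ β, β < o → ∃ γ ∈ C, β ≤ γ) ∧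
    ∀ β, β < o → 0 < β → (∀ γ, γ < β → ∃ ξ ∈ C, γ < ξ ∧ ξ < β) → β ∈ C

/-- The set of functions coding elements of the club filter as characteristic functions. -/
def ClSet (o v : Ordinal.{u}) : Set (SeqFull o v) :=
  {x | ∃ C : Set Ordinal.{u}, IsClubIn C o ∧ ∀ i ∈ C, x.val i ≠ 0}

/-- The set of functions coding elements of the nonstationary ideal. -/
def NsSet (o v : Ordinal.{u}) : Set (SeqFull o v) :=
  {x | ∃ C : Set Ordinal.{u}, IsClubIn C o ∧ ∀ i ∈ C, x.val i = 0}

/-- `A` is almost Baire: there is a dense homomorphism `f` with `ran f* ⊆ A`, or a dense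
continuous homomorphism `f` with `f ∅ = ∅` and `ran f* ⊆ Aᶜ`. -/
def AlmostBaire {o v : Ordinal.{u}} (A : Set (SeqFull o v)) : Prop :=
  ∃ f : SeqLT o v → SeqLT o v, IsHom f ∧ IsDenseMap f ∧
    ((∀ x y, FStarVal f x y → y ∈ A) ∨
      ((∀ x y, FStarVal f x y → y ∉ A) ∧ IsContinuousMap f ∧
        f (SeqLT.empty o v) = SeqLT.empty o v))

/-! ## Banach–Mazur games of length `o`

A run of the game is a strictly increasing sequence `⟨s_α : α < o⟩` in `v^{<o}`;
player I plays at even positions (`0` and limits count as even), player II at odd ones.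
In the game `G^t` the first move of player I must extend `t`; taking `t = ∅` gives the
plain Banach–Mazur game. -/

/-- `γ` is an even ordinal (`0` and limits are even). -/
def EvenOrd (γ : Ordinal.{u}) : Prop := ∃ δ : Ordinal.{u}, γ = 2 * δ

/-- `γ` is an odd ordinal. -/
def OddOrd (γ : Ordinal.{u}) : Prop := ∃ δ : Ordinal.{u}, γ = 2 * δ + 1

/-- The moves of a (partial) run, as a function on ordinals. -/
abbrev Play (o v : Ordinal.{u}) := Ordinal.{u} → SeqLT o v

/-- A strategy: given the length of the current position and the moves so far,
produce the next move. -/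
abbrev Strat (o v : Ordinal.{u}) := Ordinal.{u} → Play o v → SeqLT o v

/-- `p` is a legal partial run of length `γ` of the game `G^t`: strictly increasing moves,
the first move extends `t`, and the moves beyond `γ` are normalized to `∅`. -/
def IsPos {o v : Ordinal.{u}} (t : SeqLT o v) (p : Play o v) (γ : Ordinal.{u}) : Prop :=
  (∀ α β, α < β → β < γ → (p α).slt (p β)) ∧ (0 < γ → t.le (p 0)) ∧
    ∀ α, γ ≤ α → p α = SeqLT.empty o v

/-- The restriction of a run to its first `γ` moves. -/
def resPlay {o v : Ordinal.{u}} (p : Play o v) (γ : Ordinal.{u}) : Play o v :=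
  fun α => if α < γ then p α else SeqLT.empty o v

/-- `m` is a legal move at the position `p` of length `γ` in the game `G^t`. -/
def MoveOK {o v : Ordinal.{u}} (t : SeqLT o v) (p : Play o v) (γ : Ordinal.{u})
    (m : SeqLT o v) : Prop :=
  (∀ α, α < γ → (p α).slt m) ∧ (γ = 0 → t.le m)

/-- `σ` is a strategy for player I in `G^t`: it assigns a legal move to every legal
position of even length. -/
def LegalI {o v : Ordinal.{u}} (t : SeqLT o v) (σ : Strat o v) : Prop :=
  ∀ γ, γ < o → EvenOrd γ → ∀ p, IsPos t p γ → MoveOK t p γ (σ γ p)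

/-- `σ` is a strategy for player II in `G^t`: it assigns a legal move to every legal
position of odd length. -/
def LegalII {o v : Ordinal.{u}} (t : SeqLT o v) (σ : Strat o v) : Prop :=
  ∀ γ, γ < o → OddOrd γ → ∀ p, IsPos t p γ → MoveOK t p γ (σ γ p)

/-- The first `γ` moves of `p` follow the strategy `σ` of player I. -/
def FollowsI {o v : Ordinal.{u}} (σ : Strat o v) (p : Play o v) (γ : Ordinal.{u}) : Prop :=
  ∀ α, α < γ → EvenOrd α → p α = σ α (resPlay p α)

/-- The first `γ` moves of `p` follow the strategy `σ` of player II. -/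
def FollowsII {o v : Ordinal.{u}} (σ : Strat o v) (p : Play o v) (γ : Ordinal.{u}) : Prop :=
  ∀ α, α < γ → OddOrd α → p α = σ α (resPlay p α)

/-- `x = ⋃_{α<o} p α` is the outcome of the complete run `p`. -/
def IsOutcome {o v : Ordinal.{u}} (p : Play o v) (x : SeqFull o v) : Prop :=
  (∀ α, α < o → (p α).prefixOf x) ∧ ∀ β, β < o → ∃ α, α < o ∧ β < (p α).len

/-- Player I has a winning strategy in the Banach–Mazur game `G^t(A)` of length `o`. -/
def WinIStrat {o v : Ordinal.{u}} (t : SeqLT o v) (A : Set (SeqFull o v)) : Prop :=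
  ∃ σ : Strat o v, LegalI t σ ∧
    ∀ p : Play o v, IsPos t p o → FollowsI σ p o → ∃ x, IsOutcome p x ∧ x ∈ A

/-- Player II has a winning strategy in the Banach–Mazur game `G^t(A)` of length `o`. -/
def WinIIStrat {o v : Ordinal.{u}} (t : SeqLT o v) (A : Set (SeqFull o v)) : Prop :=
  ∃ σ : Strat o v, LegalII t σ ∧
    ∀ p : Play o v, IsPos t p o → FollowsII σ p o → ∃ x, IsOutcome p x ∧ x ∉ A

/-- `σ` is a tactic for player II: its moves depend only on the union of the previous moves. -/
def IsTacticII {o v : Ordinal.{u}} (t : SeqLT o v) (σ : Strat o v) : Prop :=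
  ∃ f : SeqLT o v → SeqLT o v, ∀ γ, γ < o → OddOrd γ → ∀ p, IsPos t p γ →
    ∀ u, IsUnionOfChain u γ p → σ γ p = f u

/-- Player II has a winning tactic in the Banach–Mazur game `G^t(A)` of length `o`. -/
def WinIITactic {o v : Ordinal.{u}} (t : SeqLT o v) (A : Set (SeqFull o v)) : Prop :=
  ∃ σ : Strat o v, LegalII t σ ∧ IsTacticII t σ ∧
    ∀ p : Play o v, IsPos t p o → FollowsII σ p o → ∃ x, IsOutcome p x ∧ x ∉ A

/-! ## Trees and perfect sets -/

/-- A subtree of `v^{<o}`: a downwards closed set of sequences. -/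
def IsSubtree {o v : Ordinal.{u}} (T : Set (SeqLT o v)) : Prop :=
  ∀ s ∈ T, ∀ r : SeqLT o v, r.le s → r ∈ T

/-- `T` is closed: every strictly increasing sequence in `T` of length `< o` has an
upper bound in `T`. -/
def TreeClosed {o v : Ordinal.{u}} (T : Set (SeqLT o v)) : Prop :=
  ∀ γ : Ordinal.{u}, γ < o → ∀ s : Ordinal.{u} → SeqLT o v,
    (∀ α β, α < β → β < γ → (s α).slt (s β)) → (∀ α, α < γ → s α ∈ T) →
      ∃ b ∈ T, ∀ α, α < γ → (s α).le b

/-- `t` is a direct successor of `s`. -/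
def IsDirectSucc {o v : Ordinal.{u}} (s t : SeqLT o v) : Prop :=
  s.slt t ∧ t.len = s.len + 1

/-- `T` is a perfect tree: a (nonempty) closed subtree whose splitting nodes are cofinal. -/
def IsPerfectTree {o v : Ordinal.{u}} (T : Set (SeqLT o v)) : Prop :=
  T.Nonempty ∧ IsSubtree T ∧ TreeClosed T ∧
    ∀ s ∈ T, ∃ t ∈ T, s.le t ∧
      ∃ t₁ ∈ T, ∃ t₂ ∈ T, IsDirectSucc t t₁ ∧ IsDirectSucc t t₂ ∧ t₁ ≠ t₂

/-- The body `[T]` of a tree `T`: the set of branches of length `o` through `T`. -/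
def treeBody {o v : Ordinal.{u}} (T : Set (SeqLT o v)) : Set (SeqFull o v) :=
  {x | ∀ α, α < o → x.res α ∈ T}


/-!
If player I has a winning strategy `σ`, enumerate `ν^{<ν}` in order type `ν` (possible since
`ν^{<ν} = ν`) as `E`, and for `s` simulate the run in which I follows `σ` while II, in round `δ`,
extends the position towards `E (s δ)`; `f s` is I's move after `len s` rounds. The simulated runs
along `s ⊊ t` agree up to round `len s`, so `f` is a homomorphism; II may aim at any `t ⊇ f s`
in the next round, so `f` is dense; and along `x ∈ ν^ν` the simulated run is a run according to
`σ` with outcome `f*(x)`, which therefore lies in `A`.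

Conversely, from a dense homomorphism `f` player I builds, along the run, an increasing sequence
`t_δ` and plays `f t_δ` at position `2δ`: density pulls II's reply at `2δ + 1` back below
`f (t_δ⌢⟨β⟩)` for some `β`, and at limits regularity of `ν` bounds the earlier `t_δ` from above.
If `x` is the union of the `t_δ`, then `f*(x)` is the outcome of the run, so it lies in `A`.
-/

theorem Cardinal.two_mul_lt_ord {ν : Cardinal.{u}} (hν : Cardinal.aleph0 ≤ ν) {δ : Ordinal.{u}}
    (hδ : δ < ν.ord) : 2 * δ < ν.ord :=
  Ordinal.isPrincipal_mul_ord hν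
    (Cardinal.lt_ord.mpr (by simpa using (Cardinal.natCast_lt_aleph0 (n := 2)).trans_le hν)) hδ

theorem Cardinal.iSup_add_one_lt_ord_of_isRegular {ν : Cardinal.{u}} (hreg : ν.IsRegular)
    {γ : Ordinal.{u}} (hγ : γ < ν.ord) (f : Ordinal.{u} → Ordinal.{u})
    (hf : ∀ δ < γ, f δ < ν.ord) : ⨆ δ : Set.Iio γ, f δ + 1 < ν.ord := by
  refine Ordinal.lift_iSup_add_one_lt_of_lt_cof ?_ fun δ => hf δ δ.2
  rw [Cardinal.mk_Iio_ordinal, ← Ordinal.lift_cof, hreg.cof_ord]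
  simpa [← Ordinal.lift_card, Cardinal.lift_lt] using Cardinal.lt_ord.mp hγ

namespace Ordinal

theorem two_mul_div_two_of_evenOrd {α : Ordinal.{u}} (h : EvenOrd α) : 2 * (α / 2) = α := by
  obtain ⟨δ, rfl⟩ := h
  rw [Ordinal.mul_div_cancel _ two_ne_zero]

theorem two_mul_div_two_add_one {α : Ordinal.{u}} (h : 2 * (α / 2) < α) :
    2 * (α / 2) + 1 = α := by
  have hmod : α % 2 = 1 := by
    have hle : α % 2 ≤ 1 :=
      Order.lt_add_one_iff.mp ((one_add_one_eq_two (R := Ordinal)).symm ▸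
        Ordinal.mod_lt α two_ne_zero)
    refine (Order.le_one_iff.mp hle).resolve_left fun h0 => h.ne ?_
    conv_rhs => rw [← Ordinal.div_add_mod α 2, h0, add_zero]
  conv_rhs => rw [← Ordinal.div_add_mod α 2, hmod]

theorem two_mul_add_one_div_two (δ : Ordinal.{u}) : (2 * δ + 1) / 2 = δ := by
  rw [Ordinal.mul_add_div _ two_ne_zero, Ordinal.div_eq_zero_of_lt one_lt_two, add_zero]

theorem two_mul_add_one_add_one (δ : Ordinal.{u}) : 2 * (δ + 1) = 2 * δ + 1 + 1 := by
  rw [mul_add_one, add_assoc, one_add_one_eq_two]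

end Ordinal

attribute [ext] SeqLT SeqFull

namespace SeqLT

variable {o v : Ordinal.{u}} {s t : SeqLT o v} {β : Ordinal.{u}}

theorem eq_of_le_of_len_le (h : s.le t) (h' : t.len ≤ s.len) : s = t := by
  have hlen : s.len = t.len := le_antisymm h.1 h'
  ext β
  · exact hlen
  · rcases lt_or_ge β s.len with hβ | hβ
    · exact h.2 β hβ
    · rw [s.val_zero β hβ, t.val_zero β (hlen ▸ hβ)]

instance : PartialOrder (SeqLT o v) where
  le := SeqLT.le
  lt := SeqLT.slt
  le_refl := SeqLT.le_refl
  le_trans _ _ _ := SeqLT.le_trans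
  le_antisymm _ _ h h' := eq_of_le_of_len_le h h'.1
  lt_iff_le_not_ge s t := by
    refine ⟨fun h => ⟨h.1, fun h' => h.2.not_ge h'.1⟩, fun ⟨h, h'⟩ => ⟨h, ?_⟩⟩
    exact lt_of_le_of_ne h.1 fun hlen => h' (eq_of_le_of_len_le h hlen.ge ▸ SeqLT.le_refl t)

theorem len_mono : Monotone (SeqLT.len : SeqLT o v → Ordinal.{u}) := fun _ _ h => h.1

theorem len_strictMono : StrictMono (SeqLT.len : SeqLT o v → Ordinal.{u}) := fun _ _ h => h.2

theorem empty_le (s : SeqLT o v) : SeqLT.empty o v ≤ s :=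
  ⟨zero_le, fun _ h => (not_lt_zero h).elim⟩

theorem len_lt_of_pos (ho : 0 < o) (s : SeqLT o v) : s.len < o :=
  s.len_lt.trans_le (sup_le le_rfl (Order.one_le_iff_pos.mpr ho))

theorem len_add_one_lt_sup_one (ho : Order.IsSuccLimit o) (s : SeqLT o v) :
    s.len + 1 < o ⊔ 1 :=
  (ho.add_one_lt (s.len_lt_of_pos ho.bot_lt)).trans_le le_sup_left

theorem snoc_len (ho : Order.IsSuccLimit o) (hβ : β < v) : (s.snoc β).len = s.len + 1 := by
  rw [snoc, dif_pos ⟨s.len_add_one_lt_sup_one ho, hβ⟩]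

theorem snoc_val_len (ho : Order.IsSuccLimit o) (hβ : β < v) : (s.snoc β).val s.len = β := by
  rw [snoc, dif_pos ⟨s.len_add_one_lt_sup_one ho, hβ⟩]; simp

theorem lt_snoc (ho : Order.IsSuccLimit o) (hβ : β < v) : s < s.snoc β := by
  refine ⟨⟨?_, fun γ hγ => ?_⟩, ?_⟩ <;> rw [snoc, dif_pos ⟨s.len_add_one_lt_sup_one ho, hβ⟩]
  · exact (lt_add_one _).le
  · simp [hγ.ne]
  · exact lt_add_one _

theorem prefixOf_of_le {x : SeqFull o v} (h : s ≤ t) (ht : t.prefixOf x) : s.prefixOf x :=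
  fun γ hγ => (h.2 γ hγ).trans (ht γ (hγ.trans_le h.1))

theorem le_of_prefixOf {x : SeqFull o v} (hs : s.prefixOf x) (ht : t.prefixOf x)
    (h : s.len ≤ t.len) : s ≤ t :=
  ⟨h, fun γ hγ => (hs γ hγ).trans (ht γ (hγ.trans_le h)).symm⟩

end SeqLT

namespace SeqFull

variable {o v : Ordinal.{u}} {x : SeqFull o v} {α : Ordinal.{u}}

theorem res_len (h : α < o ⊔ 1) : (x.res α).len = α := by
  rw [res, dif_pos h]

theorem res_val (h : α < o ⊔ 1) {γ : Ordinal.{u}} (hγ : γ < α) : (x.res α).val γ = x.val γ := by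
  rw [res, dif_pos h]; simp [hγ]

theorem res_prefixOf (h : α < o ⊔ 1) : (x.res α).prefixOf x := fun _ hγ =>
  res_val h (hγ.trans_eq (res_len h))

theorem res_le_of_prefixOf {s : SeqLT o v} (hs : s.prefixOf x) (h : α ≤ s.len) : x.res α ≤ s :=
  have hα : α < o ⊔ 1 := h.trans_lt s.len_lt
  SeqLT.le_of_prefixOf (res_prefixOf hα) hs ((res_len hα).trans_le h)

theorem res_eq_of_prefixOf {s : SeqLT o v} (hs : s.prefixOf x) : x.res s.len = s :=
  SeqLT.eq_of_le_of_len_le (res_le_of_prefixOf hs le_rfl) (res_len s.len_lt).ge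

end SeqFull

theorem IsHom.monotone {o v : Ordinal.{u}} {f : SeqLT o v → SeqLT o v} (hf : IsHom f) :
    Monotone f :=
  StrictMono.monotone fun s t => hf s t

theorem IsPos.lt {o v : Ordinal.{u}} {t : SeqLT o v} {p : Play o v} {γ α β : Ordinal.{u}}
    (hp : IsPos t p γ) (hαβ : α < β) (hβ : β < γ) : p α < p β :=
  hp.1 α β hαβ hβ

theorem IsPos.strictMonoOn {o v : Ordinal.{u}} {t : SeqLT o v} {p : Play o v} {γ : Ordinal.{u}}
    (hp : IsPos t p γ) : StrictMonoOn p (Set.Iio γ) :=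
  fun _ _ _ hβ hαβ => hp.lt hαβ hβ

theorem resPlay_of_lt {o v : Ordinal.{u}} (p : Play o v) {γ α : Ordinal.{u}} (h : α < γ) :
    resPlay p γ α = p α :=
  if_pos h

theorem isPos_resPlay {o v : Ordinal.{u}} {p : Play o v} {γ : Ordinal.{u}}
    (hp : StrictMonoOn p (Set.Iio γ)) : IsPos (SeqLT.empty o v) (resPlay p γ) γ := by
  refine ⟨fun α β hαβ hβ => ?_, fun _ => SeqLT.empty_le _, fun α hα => if_neg hα.not_gt⟩
  rw [resPlay_of_lt p hβ, resPlay_of_lt p (hαβ.trans hβ)]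
  exact hp (hαβ.trans hβ) hβ hαβ

theorem IsOutcome.unique {o v : Ordinal.{u}} {p : Play o v} {x y : SeqFull o v}
    (hx : IsOutcome p x) (hy : IsOutcome p y) : x = y := by
  ext β
  rcases lt_or_ge β o with hβ | hβ
  · obtain ⟨α, hα, hβα⟩ := hx.2 β hβ
    rw [← hx.1 α hα β hβα, hy.1 α hα β hβα]
  · rw [x.val_zero β hβ, y.val_zero β hβ]

section Chains

open Set Classical

variable {o v : Ordinal.{u}} {g : Ordinal.{u} → SeqLT o v} {γ : Ordinal.{u}}

def unionVal (g : Ordinal.{u} → SeqLT o v) (γ β : Ordinal.{u}) : Ordinal.{u} :=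
  if h : ∃ δ < γ, β < (g δ).len then (g h.choose).val β else 0

theorem unionVal_eq (hg : MonotoneOn g (Iio γ)) {δ β : Ordinal.{u}} (hδ : δ < γ)
    (hβ : β < (g δ).len) : unionVal g γ β = (g δ).val β := by
  have h : ∃ δ < γ, β < (g δ).len := ⟨δ, hδ, hβ⟩
  rw [unionVal, dif_pos h]
  rcases le_total h.choose δ with hle | hle
  · exact (hg h.choose_spec.1 hδ hle).2 β h.choose_spec.2
  · exact ((hg hδ h.choose_spec.1 hle).2 β hβ).symm

theorem unionVal_lt (hv : 0 < v) (β : Ordinal.{u}) : unionVal g γ β < v := by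
  unfold unionVal
  split_ifs with h
  exacts [(g _).val_lt β h.choose_spec.2, hv]

theorem exists_forall_lt_of_monotoneOn {ν : Cardinal.{u}} (hreg : ν.IsRegular)
    (hv : 0 < v) {g : Ordinal.{u} → SeqLT ν.ord v} (hγ : γ < ν.ord)
    (hg : MonotoneOn g (Iio γ)) : ∃ m, ∀ δ < γ, g δ < m := by
  have ho : 0 < ν.ord := (Cardinal.isSuccLimit_ord hreg.aleph0_le).bot_lt
  set L := ⨆ δ : Iio γ, (g δ).len + 1
  have hL : L < ν.ord ⊔ 1 := (Cardinal.iSup_add_one_lt_ord_of_isRegular hreg hγ _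
    fun δ _ => (g δ).len_lt_of_pos ho).trans_le le_sup_left
  have hlen : ∀ δ < γ, (g δ).len < L := fun δ hδ =>
    (lt_add_one _).trans_le (Ordinal.le_iSup (fun δ : Iio γ => (g δ).len + 1) ⟨δ, hδ⟩)
  refine ⟨⟨L, hL, fun β => if β < L then unionVal g γ β else 0,
    fun β hβ => by simpa [hβ] using unionVal_lt hv β, fun β hβ => by simp [hβ.not_gt]⟩,
    fun δ hδ => ⟨⟨(hlen δ hδ).le, fun β hβ => ?_⟩, hlen δ hδ⟩⟩
  simp [hβ.trans (hlen δ hδ), unionVal_eq hg hδ hβ]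

theorem exists_isOutcome (hg : MonotoneOn g (Iio o))
    (hcof : ∀ β < o, ∃ α < o, β < (g α).len) : ∃ x, IsOutcome g x := by
  refine ⟨⟨fun β => if β < o then unionVal g o β else 0, fun β hβ => ?_,
    fun β hβ => by simp [hβ.not_gt]⟩, fun α hα β hβ => ?_, hcof⟩
  · obtain ⟨α, hα, hβα⟩ := hcof β hβ
    simpa [hβ, unionVal_eq hg hα hβα] using (g α).val_lt β hβα
  · have hβo : β < o := hβ.trans ((g α).len_lt_of_pos (zero_le.trans_lt hα))
    simp [hβo, unionVal_eq hg hα hβ]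

theorem le_len_of_strictMonoOn (hg : StrictMonoOn g (Iio γ)) {δ : Ordinal.{u}} (hδ : δ < γ) :
    δ ≤ (g δ).len := by
  induction δ using WellFoundedLT.induction with
  | ind δ IH =>
    by_contra! hlt
    exact (IH _ hlt (hlt.trans hδ)).not_gt (hg (hlt.trans hδ) hδ hlt).2

theorem exists_isOutcome_of_strictMonoOn (ho : Order.IsSuccLimit o)
    (hg : StrictMonoOn g (Iio o)) : ∃ x, IsOutcome g x :=
  exists_isOutcome hg.monotoneOn fun β hβ => ⟨β + 1, ho.add_one_lt hβ,
    (lt_add_one β).trans_le (le_len_of_strictMonoOn hg (ho.add_one_lt hβ))⟩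

end Chains

section StrategyOfDense

open Set Classical

variable {o v : Ordinal.{u}} {f : SeqLT o v → SeqLT o v} {p : Play o v}

def densityWitness (f : SeqLT o v → SeqLT o v) (q t : SeqLT o v) : Ordinal.{u} :=
  if h : ∃ β, β < v ∧ q ≤ f (t.snoc β) then h.choose else 0

theorem densityWitness_lt (hv : 0 < v) (q t : SeqLT o v) : densityWitness f q t < v := by
  unfold densityWitness
  split_ifs with h
  exacts [h.choose_spec.1, hv]

theorem le_apply_snoc_densityWitness (hf : IsDenseMap f) {q t : SeqLT o v} (h : f t ≤ q) :
    q ≤ f (t.snoc (densityWitness f q t)) := by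
  have hex : ∃ β, β < v ∧ q ≤ f (t.snoc β) := hf t q h
  rw [densityWitness, dif_pos hex]
  exact hex.choose_spec.2

def strictUpperBound (g : Ordinal.{u} → SeqLT o v) (γ : Ordinal.{u}) : SeqLT o v :=
  if h : ∃ m, ∀ δ < γ, g δ < m then h.choose else SeqLT.empty o v

theorem lt_strictUpperBound {g : Ordinal.{u} → SeqLT o v} {γ δ : Ordinal.{u}}
    (h : ∃ m, ∀ δ < γ, g δ < m) (hδ : δ < γ) : g δ < strictUpperBound g γ := by
  rw [strictUpperBound, dif_pos h]
  exact h.choose_spec δ hδ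

/-- The sequence `t_δ` that player I pulls the run `p` back to; I's move at `2 * δ` is
`f (shadow f p δ)`. The final `snoc 0` makes that move a proper extension of II's move at
`2 * δ + 1`. -/
def shadow (f : SeqLT o v → SeqLT o v) (p : Play o v) (δ : Ordinal.{u}) : SeqLT o v :=
  Ordinal.limitRecOn δ (SeqLT.empty o v)
    (fun δ t => (t.snoc (densityWitness f (p (2 * δ + 1)) t)).snoc 0)
    (fun γ _ ih => strictUpperBound (fun δ => if h : δ < γ then ih δ h else SeqLT.empty o v) γ)

theorem shadow_zero : shadow f p 0 = SeqLT.empty o v :=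
  Ordinal.limitRecOn_zero ..

theorem shadow_add_one (δ : Ordinal.{u}) : shadow f p (δ + 1) =
    ((shadow f p δ).snoc (densityWitness f (p (2 * δ + 1)) (shadow f p δ))).snoc 0 :=
  Ordinal.limitRecOn_add_one ..

theorem shadow_limit {γ : Ordinal.{u}} (hγ : Order.IsSuccLimit γ) : shadow f p γ =
    strictUpperBound (fun δ => if δ < γ then shadow f p δ else SeqLT.empty o v) γ := by
  rw [shadow, Ordinal.limitRecOn_limit _ _ _ _ hγ]
  simp only [dite_eq_ite]
  rfl

theorem shadow_congr {q : Play o v} {δ : Ordinal.{u}} (h : ∀ α < 2 * δ, p α = q α) :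
    shadow f p δ = shadow f q δ := by
  induction δ using Ordinal.limitRecOn with
  | zero => rw [shadow_zero, shadow_zero]
  | add_one δ IH =>
    have hodd : 2 * δ + 1 < 2 * (δ + 1) := by
      rw [Ordinal.two_mul_add_one_add_one]; exact lt_add_one _
    rw [shadow_add_one, shadow_add_one, h _ hodd,
      IH fun α hα => h α (hα.trans ((lt_add_one _).trans hodd))]
  | limit γ hγ IH =>
    rw [shadow_limit hγ, shadow_limit hγ]
    congr 1
    funext δ
    split_ifs with hδ
    · exact IH δ hδ fun α hα => h α (hα.trans (mul_lt_mul_of_pos_left hδ two_pos))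
    · rfl

theorem shadow_strictMonoOn {ν : Cardinal.{u}} (hreg : ν.IsRegular) (hv : 0 < v)
    {f : SeqLT ν.ord v → SeqLT ν.ord v} (p : Play ν.ord v) :
    StrictMonoOn (shadow f p) (Iio ν.ord) := by
  have ho : Order.IsSuccLimit ν.ord := Cardinal.isSuccLimit_ord hreg.aleph0_le
  suffices h : ∀ δ < ν.ord, ∀ ε < δ, shadow f p ε < shadow f p δ from
    fun ε _ δ hδ hεδ => h δ hδ ε hεδ
  intro δ
  induction δ using Ordinal.limitRecOn with
  | zero => exact fun _ ε hε => absurd hε not_lt_zero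
  | add_one δ IH =>
    intro hδ ε hε
    have hstep : shadow f p δ < shadow f p (δ + 1) := by
      rw [shadow_add_one]
      exact (SeqLT.lt_snoc ho (densityWitness_lt hv _ _)).trans (SeqLT.lt_snoc ho hv)
    rcases (Order.lt_add_one_iff.mp hε).lt_or_eq with hεδ | rfl
    exacts [(IH ((lt_add_one δ).trans hδ) ε hεδ).trans hstep, hstep]
  | limit γ hγ IH =>
    intro hγo ε hε
    have hmono : MonotoneOn (fun δ => if δ < γ then shadow f p δ else SeqLT.empty ν.ord v)
        (Iio γ) := by
      intro a (ha : a < γ) b (hb : b < γ) hab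
      simp only [ha, hb, if_true]
      rcases hab.lt_or_eq with h | rfl
      exacts [(IH b hb (hb.trans hγo) a h).le, le_rfl]
    rw [shadow_limit hγ]
    simpa [hε] using lt_strictUpperBound (exists_forall_lt_of_monotoneOn hreg hv hγo hmono) hε

def strategyOfDense (f : SeqLT o v → SeqLT o v) : Strat o v := fun γ p =>
  if ∀ α < γ, p α < f (shadow f p (γ / 2)) then f (shadow f p (γ / 2))
  else strictUpperBound p γ

theorem legalI_strategyOfDense {ν : Cardinal.{u}} (hreg : ν.IsRegular) (hv : 0 < v)
    (f : SeqLT ν.ord v → SeqLT ν.ord v) :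
    LegalI (SeqLT.empty ν.ord v) (strategyOfDense f) := by
  intro γ hγ _ p hp
  refine ⟨fun α hα => ?_, fun _ => SeqLT.empty_le _⟩
  unfold strategyOfDense
  split_ifs with h
  · exact h α hα
  · exact lt_strictUpperBound
      (exists_forall_lt_of_monotoneOn hreg hv hγ hp.strictMonoOn.monotoneOn) hα

theorem strategyOfDense_two_mul {δ : Ordinal.{u}}
    (h : ∀ α < 2 * δ, p α < f (shadow f p δ)) :
    strategyOfDense f (2 * δ) (resPlay p (2 * δ)) = f (shadow f p δ) := by
  have hsh : shadow f (resPlay p (2 * δ)) δ = shadow f p δ :=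
    shadow_congr fun α hα => resPlay_of_lt p hα
  rw [strategyOfDense, Ordinal.mul_div_cancel _ two_ne_zero, hsh,
    if_pos fun α hα => (resPlay_of_lt p hα).symm ▸ h α hα]

theorem apply_two_mul_eq_shadow {ν : Cardinal.{u}} (hreg : ν.IsRegular) (hv : 0 < v)
    {f : SeqLT ν.ord v → SeqLT ν.ord v} (hf : IsHom f) (hd : IsDenseMap f)
    {p : Play ν.ord v} (hp : IsPos (SeqLT.empty ν.ord v) p ν.ord)
    (hfol : FollowsI (strategyOfDense f) p ν.ord) {δ : Ordinal.{u}} (hδ : 2 * δ < ν.ord) :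
    p (2 * δ) = f (shadow f p δ) := by
  have ho : Order.IsSuccLimit ν.ord := Cardinal.isSuccLimit_ord hreg.aleph0_le
  rw [hfol _ hδ ⟨δ, rfl⟩]
  refine strategyOfDense_two_mul fun α hα => ?_
  induction δ using Ordinal.limitRecOn generalizing α with
  | zero => exact absurd hα (by simp)
  | add_one δ IH =>
    rw [Ordinal.two_mul_add_one_add_one] at hδ hα
    have hodd : 2 * δ + 1 < ν.ord := (lt_add_one _).trans hδ
    have hev : 2 * δ < ν.ord := (lt_add_one _).trans hodd
    have hpδ : p (2 * δ) = f (shadow f p δ) := by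
      rw [hfol _ hev ⟨δ, rfl⟩]
      exact strategyOfDense_two_mul fun α hα => IH hev α hα
    have hII : p (2 * δ + 1) ≤
        f ((shadow f p δ).snoc (densityWitness f (p (2 * δ + 1)) (shadow f p δ))) :=
      le_apply_snoc_densityWitness hd (hpδ ▸ (hp.lt (lt_add_one _) hodd).le)
    have hI : f ((shadow f p δ).snoc (densityWitness f (p (2 * δ + 1)) (shadow f p δ))) <
        f (shadow f p (δ + 1)) := by
      rw [shadow_add_one]; exact hf _ _ (SeqLT.lt_snoc ho hv)
    refine lt_of_le_of_lt ?_ (hII.trans_lt hI)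
    rcases (Order.lt_add_one_iff.mp hα).lt_or_eq with hα' | rfl
    exacts [(hp.lt hα' hodd).le, le_rfl]
  | limit γ hγ IH =>
    obtain ⟨ε, hεγ, hαε⟩ := (Ordinal.lt_mul_iff_of_isSuccLimit hγ).mp hα
    have hε : 2 * ε < ν.ord := (mul_lt_mul_of_pos_left hεγ two_pos).trans hδ
    have hγo : γ < ν.ord := (Ordinal.le_mul_right γ two_pos).trans_lt hδ
    have hpε : p (2 * ε) = f (shadow f p ε) := by
      rw [hfol _ hε ⟨ε, rfl⟩]
      exact strategyOfDense_two_mul fun α hα => IH ε hεγ hε α hα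
    have hTγ : shadow f p ε < shadow f p γ :=
      shadow_strictMonoOn hreg hv p (hεγ.trans hγo) hγo hεγ
    exact (hp.lt hαε hε).trans (hpε ▸ hf _ _ hTγ)

theorem fStarVal_of_isOutcome {ν : Cardinal.{u}} (hν : Cardinal.aleph0 ≤ ν)
    {f : SeqLT ν.ord v → SeqLT ν.ord v} (hf : Monotone f) {T p : Play ν.ord v}
    {x y : SeqFull ν.ord v} (hT : IsOutcome T x) (hy : IsOutcome p y)
    (hp : MonotoneOn p (Iio ν.ord)) (hpT : ∀ δ < ν.ord, p (2 * δ) = f (T δ)) :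
    FStarVal f x y := by
  have ho : 0 < ν.ord := (Cardinal.isSuccLimit_ord hν).bot_lt
  constructor
  · intro α hα
    obtain ⟨δ, hδ, hαδ⟩ := hT.2 α hα
    have hle : f (x.res α) ≤ p (2 * δ) :=
      hpT δ hδ ▸ hf (SeqFull.res_le_of_prefixOf (hT.1 δ hδ) hαδ.le)
    exact SeqLT.prefixOf_of_le hle (hy.1 _ (Cardinal.two_mul_lt_ord hν hδ))
  · intro β hβ
    obtain ⟨γ, hγ, hβγ⟩ := hy.2 β hβ
    refine ⟨(T γ).len, (T γ).len_lt_of_pos ho, hβγ.trans_le (SeqLT.len_mono ?_)⟩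
    rw [SeqFull.res_eq_of_prefixOf (hT.1 γ hγ), ← hpT γ hγ]
    exact hp hγ (Cardinal.two_mul_lt_ord hν hγ) (Ordinal.le_mul_right γ two_pos)

theorem winIStrat_of_dense {ν : Cardinal.{u}} (hreg : ν.IsRegular) (hv : 0 < v)
    {A : Set (SeqFull ν.ord v)} {f : SeqLT ν.ord v → SeqLT ν.ord v}
    (hf : IsHom f) (hd : IsDenseMap f) (hA : ∀ x y, FStarVal f x y → y ∈ A) :
    WinIStrat (SeqLT.empty ν.ord v) A := by
  have hν := hreg.aleph0_le
  have ho : Order.IsSuccLimit ν.ord := Cardinal.isSuccLimit_ord hν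
  refine ⟨strategyOfDense f, legalI_strategyOfDense hreg hv f, fun p hp hfol => ?_⟩
  obtain ⟨x, hx⟩ := exists_isOutcome_of_strictMonoOn ho (shadow_strictMonoOn hreg hv (f := f) p)
  obtain ⟨y, hy⟩ := exists_isOutcome_of_strictMonoOn ho hp.strictMonoOn
  refine ⟨y, hy, hA x y (fStarVal_of_isOutcome hν hf.monotone hx hy
    hp.strictMonoOn.monotoneOn fun δ hδ => ?_)⟩
  exact apply_two_mul_eq_shadow hreg hv hf hd hp hfol (Cardinal.two_mul_lt_ord hν hδ)

end StrategyOfDense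

section SimulatedRun

open Set Classical

variable {o v : Ordinal.{u}}

def extendTowards (q t : SeqLT o v) : SeqLT o v :=
  if q ≤ t then t.snoc 0 else q.snoc 0

theorem lt_extendTowards (ho : Order.IsSuccLimit o) (hv : 0 < v) (q t : SeqLT o v) :
    q < extendTowards q t := by
  unfold extendTowards
  split_ifs with h
  exacts [h.trans_lt (SeqLT.lt_snoc ho hv), SeqLT.lt_snoc ho hv]

theorem le_extendTowards (ho : Order.IsSuccLimit o) (hv : 0 < v) {q t : SeqLT o v}
    (h : q ≤ t) : t ≤ extendTowards q t := by
  rw [extendTowards, if_pos h]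
  exact (SeqLT.lt_snoc ho hv).le

/-- The run in which player I follows `σ` and player II, at position `2 * δ + 1`, extends the
position towards `E (x δ)`; `2 * (α / 2) < α` says that `α` is odd. -/
def simRun (σ : Strat o v) (E : Ordinal.{u} → SeqLT o v) (x : Ordinal.{u} → Ordinal.{u})
    (α : Ordinal.{u}) : SeqLT o v :=
  if 2 * (α / 2) < α then extendTowards (simRun σ E x (2 * (α / 2))) (E (x (α / 2)))
  else σ α fun β => if β < α then simRun σ E x β else SeqLT.empty o v
termination_by α

theorem simRun_eq (σ : Strat o v) (E : Ordinal.{u} → SeqLT o v) (x : Ordinal.{u} → Ordinal.{u})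
    (α : Ordinal.{u}) : simRun σ E x α =
      if 2 * (α / 2) < α then extendTowards (simRun σ E x (2 * (α / 2))) (E (x (α / 2)))
      else σ α (resPlay (simRun σ E x) α) := by
  rw [simRun]
  rfl

variable {σ : Strat o v} {E : Ordinal.{u} → SeqLT o v} {x : Ordinal.{u} → Ordinal.{u}}

theorem simRun_of_evenOrd {α : Ordinal.{u}} (h : EvenOrd α) :
    simRun σ E x α = σ α (resPlay (simRun σ E x) α) := by
  rw [simRun_eq, if_neg (Ordinal.two_mul_div_two_of_evenOrd h).not_lt]

theorem simRun_two_mul_add_one (δ : Ordinal.{u}) :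
    simRun σ E x (2 * δ + 1) = extendTowards (simRun σ E x (2 * δ)) (E (x δ)) := by
  rw [simRun_eq, Ordinal.two_mul_add_one_div_two, if_pos (lt_add_one _)]

theorem simRun_congr {y : Ordinal.{u} → Ordinal.{u}} {α : Ordinal.{u}}
    (h : ∀ β, 2 * β < α → x β = y β) : simRun σ E x α = simRun σ E y α := by
  induction α using WellFoundedLT.induction with
  | ind α IH =>
    rw [simRun_eq σ E x α, simRun_eq σ E y α]
    split_ifs with hodd
    · rw [IH _ hodd fun β hβ => h β (hβ.trans hodd), h _ hodd]
    · congr 1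
      funext β
      unfold resPlay
      split_ifs with hβ
      exacts [IH β hβ fun γ hγ => h γ (hγ.trans hβ), rfl]

theorem simRun_strictMonoOn (ho : Order.IsSuccLimit o) (hv : 0 < v)
    (hσ : LegalI (SeqLT.empty o v) σ) : StrictMonoOn (simRun σ E x) (Iio o) := by
  suffices h : ∀ β < o, ∀ α < β, simRun σ E x α < simRun σ E x β from
    fun α _ β hβ hαβ => h β hβ α hαβ
  intro β
  induction β using WellFoundedLT.induction with
  | ind β IH =>
    intro hβ α hαβ
    rw [simRun_eq σ E x β]
    split_ifs with hodd
    · have hlt := lt_extendTowards ho hv (simRun σ E x (2 * (β / 2))) (E (x (β / 2)))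
      rw [← Ordinal.two_mul_div_two_add_one hodd] at hαβ
      rcases (Order.lt_add_one_iff.mp hαβ).lt_or_eq with hα | rfl
      exacts [(IH _ hodd (hodd.trans hβ) α hα).trans hlt, hlt]
    · have heven : EvenOrd β :=
        ⟨β / 2, (le_antisymm (Ordinal.mul_div_le β 2) (not_lt.mp hodd)).symm⟩
      have hpos := isPos_resPlay (p := simRun σ E x)
        fun a (_ : a < β) b (hb : b < β) hab => IH b hb (hb.trans hβ) a hab
      have hmove := (hσ β hβ heven _ hpos).1 α hαβ
      rwa [resPlay_of_lt _ hαβ] at hmove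

theorem followsI_resPlay_simRun (γ : Ordinal.{u}) :
    FollowsI σ (resPlay (simRun σ E x) γ) γ := by
  intro α hα heven
  rw [resPlay_of_lt _ hα, simRun_of_evenOrd heven]
  congr 1
  funext β
  unfold resPlay
  split_ifs with h1 h2 <;> first | rfl | exact absurd (h1.trans hα) h2

def homOfStrategy (σ : Strat o v) (E : Ordinal.{u} → SeqLT o v) (s : SeqLT o v) : SeqLT o v :=
  simRun σ E s.val (2 * s.len)

theorem simRun_two_mul_len_of_le {s t : SeqLT o v} (h : s ≤ t) :
    simRun σ E t.val (2 * s.len) = homOfStrategy σ E s :=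
  simRun_congr fun β hβ => (h.2 β (lt_of_mul_lt_mul_left' hβ)).symm

theorem homOfStrategy_res (y : SeqFull o v) {α : Ordinal.{u}} (hα : α < o ⊔ 1) :
    homOfStrategy σ E (y.res α) = simRun σ E y.val (2 * α) := by
  rw [homOfStrategy, SeqFull.res_len hα]
  exact simRun_congr fun β hβ => SeqFull.res_val hα (lt_of_mul_lt_mul_left' hβ)

end SimulatedRun

section HomOfStrategy

open Set

variable {ν : Cardinal.{u}} {v : Ordinal.{u}} {σ : Strat ν.ord v}
  {E : Ordinal.{u} → SeqLT ν.ord v}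

theorem isHom_homOfStrategy (hν : Cardinal.aleph0 ≤ ν) (hv : 0 < v)
    (hσ : LegalI (SeqLT.empty ν.ord v) σ) : IsHom (homOfStrategy σ E) := by
  intro s t (hst : s < t)
  show homOfStrategy σ E s < homOfStrategy σ E t
  have ho := Cardinal.isSuccLimit_ord hν
  have hlen : 2 * s.len < 2 * t.len := mul_lt_mul_of_pos_left (SeqLT.len_strictMono hst) two_pos
  have ht : 2 * t.len < ν.ord := Cardinal.two_mul_lt_ord hν (t.len_lt_of_pos ho.bot_lt)
  rw [← simRun_two_mul_len_of_le hst.le]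
  exact simRun_strictMonoOn ho hv hσ (hlen.trans ht) ht hlen

theorem isDenseMap_homOfStrategy (hν : Cardinal.aleph0 ≤ ν)
    (hσ : LegalI (SeqLT.empty ν.ord v) σ) (hE : ∀ t, ∃ β < v, E β = t) :
    IsDenseMap (homOfStrategy σ E) := by
  intro s t (hst : homOfStrategy σ E s ≤ t)
  obtain ⟨β, hβ, rfl⟩ := hE t
  refine ⟨β, hβ, (le_of_lt ?_ : E β ≤ _)⟩
  have ho := Cardinal.isSuccLimit_ord hν
  have hv : 0 < v := zero_le.trans_lt hβ
  have hII : simRun σ E (s.snoc β).val (2 * s.len + 1) =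
      extendTowards (homOfStrategy σ E s) (E β) := by
    rw [simRun_two_mul_add_one, simRun_two_mul_len_of_le (SeqLT.lt_snoc ho hβ).le,
      SeqLT.snoc_val_len ho hβ]
  have hI : homOfStrategy σ E (s.snoc β) = simRun σ E (s.snoc β).val (2 * s.len + 1 + 1) := by
    rw [homOfStrategy, SeqLT.snoc_len ho hβ, Ordinal.two_mul_add_one_add_one]
  have hlt : 2 * s.len + 1 + 1 < ν.ord := Ordinal.two_mul_add_one_add_one s.len ▸
    Cardinal.two_mul_lt_ord hν (ho.add_one_lt (s.len_lt_of_pos ho.bot_lt))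
  calc E β ≤ extendTowards (homOfStrategy σ E s) (E β) := le_extendTowards ho hv hst
    _ = simRun σ E (s.snoc β).val (2 * s.len + 1) := hII.symm
    _ < simRun σ E (s.snoc β).val (2 * s.len + 1 + 1) :=
      simRun_strictMonoOn ho hv hσ ((lt_add_one _).trans hlt) hlt (lt_add_one _)
    _ = homOfStrategy σ E (s.snoc β) := hI.symm

theorem mem_of_fStarVal_homOfStrategy (hν : Cardinal.aleph0 ≤ ν) (hv : 0 < v)
    {A : Set (SeqFull ν.ord v)} (hσ : LegalI (SeqLT.empty ν.ord v) σ)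
    (hwin : ∀ p, IsPos (SeqLT.empty ν.ord v) p ν.ord → FollowsI σ p ν.ord →
      ∃ x, IsOutcome p x ∧ x ∈ A)
    {x y : SeqFull ν.ord v} (hxy : FStarVal (homOfStrategy σ E) x y) : y ∈ A := by
  have ho := Cardinal.isSuccLimit_ord hν
  have hmono := simRun_strictMonoOn ho hv hσ (E := E) (x := x.val)
  obtain ⟨z, hz, hzA⟩ := hwin _ (isPos_resPlay hmono) (followsI_resPlay_simRun ν.ord)
  have hres : ∀ α < ν.ord,
      homOfStrategy σ E (x.res α) = resPlay (simRun σ E x.val) ν.ord (2 * α) := fun α hα => by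
    rw [resPlay_of_lt _ (Cardinal.two_mul_lt_ord hν hα),
      homOfStrategy_res x (hα.trans_le le_sup_left)]
  suffices hy : IsOutcome (resPlay (simRun σ E x.val) ν.ord) y from hy.unique hz ▸ hzA
  refine ⟨fun α hα => SeqLT.prefixOf_of_le ?_ (hxy.1 α hα), fun β hβ => ?_⟩
  · rw [hres α hα, resPlay_of_lt _ hα, resPlay_of_lt _ (Cardinal.two_mul_lt_ord hν hα)]
    exact hmono.monotoneOn hα (Cardinal.two_mul_lt_ord hν hα) (Ordinal.le_mul_right α two_pos)
  · obtain ⟨α, hα, hβα⟩ := hxy.2 β hβ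
    exact ⟨2 * α, Cardinal.two_mul_lt_ord hν hα, hres α hα ▸ hβα⟩

end HomOfStrategy

section Enumeration

open Cardinal Set

theorem mk_seqLT_le {ν : Cardinal.{u}} (hν : ℵ₀ ≤ ν) (hpow : Cardinal.powerlt ν ν = ν) :
    #(SeqLT ν.ord ν.ord) ≤ #(Iio ν.ord) := by
  have ho : 0 < ν.ord := (Cardinal.isSuccLimit_ord hν).bot_lt
  have hsurj : Function.Surjective fun d : Σ l : Iio ν.ord, (Iio l.1 → Iio ν.ord) =>
      (⟨d.1, d.1.2.trans_le le_sup_left, fun β => if h : β < d.1 then d.2 ⟨β, h⟩ else 0,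
        fun β hβ => by rw [dif_pos hβ]; exact (d.2 ⟨β, hβ⟩).2,
        fun β hβ => by simp [hβ.not_gt]⟩ : SeqLT ν.ord ν.ord) := by
    intro s
    refine ⟨⟨⟨s.len, s.len_lt_of_pos ho⟩, fun β => ⟨s.val β, s.val_lt β β.2⟩⟩, ?_⟩
    ext β
    · rfl
    · by_cases hβ : β < s.len
      · simp [hβ]
      · simp [hβ, s.val_zero β (not_lt.mp hβ)]
  refine (mk_le_of_surjective hsurj).trans ?_
  have hbound : ∀ l : Iio ν.ord, #(Iio l.1 → Iio ν.ord) ≤ Cardinal.lift.{u + 1} ν := by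
    intro l
    rw [← power_def, mk_Iio_ordinal, mk_Iio_ordinal, card_ord, ← lift_power, lift_le]
    exact powerlt_le.mp hpow.le _ (lt_ord.mp l.2)
  rw [mk_sigma]
  refine (sum_le_sum _ _ hbound).trans ?_
  rw [sum_const', mk_Iio_ordinal, card_ord, mul_eq_self (aleph0_le_lift.mpr hν)]

theorem exists_enum_seqLT {ν : Cardinal.{u}} (hν : ℵ₀ ≤ ν) (hpow : Cardinal.powerlt ν ν = ν) :
    ∃ E : Ordinal.{u} → SeqLT ν.ord ν.ord, ∀ t, ∃ β < ν.ord, E β = t := by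
  obtain ⟨i⟩ := (le_def _ _).mp (mk_seqLT_le hν hpow)
  have : Nonempty (SeqLT ν.ord ν.ord) := ⟨SeqLT.empty _ _⟩
  exact ⟨Function.invFun fun t => (i t : Ordinal), fun t =>
    ⟨i t, (i t).2, Function.leftInverse_invFun (Subtype.val_injective.comp i.injective) t⟩⟩

end Enumeration

/-- For an infinite regular cardinal `ν` with `ν^{<ν} = ν` and `A ⊆ ν^ν`: player I has a
winning strategy in the Banach–Mazur game `G_ν(A)` iff there is a dense homomorphism
`f : ν^{<ν} → ν^{<ν}` with `ran f* ⊆ A`. -/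
theorem statement7 (ν : Cardinal.{u}) (hreg : ν.IsRegular)
    (hpow : Cardinal.powerlt ν ν = ν) (A : Set (SeqFull ν.ord ν.ord)) :
    WinIStrat (SeqLT.empty ν.ord ν.ord) A ↔
      ∃ f : SeqLT ν.ord ν.ord → SeqLT ν.ord ν.ord,
        IsHom f ∧ IsDenseMap f ∧ ∀ x y, FStarVal f x y → y ∈ A := by
  have hν := hreg.aleph0_le
  have hv : 0 < ν.ord := (Cardinal.isSuccLimit_ord hν).bot_lt
  constructor
  · rintro ⟨σ, hσ, hwin⟩
    obtain ⟨E, hE⟩ := exists_enum_seqLT hν hpow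
    exact ⟨homOfStrategy σ E, isHom_homOfStrategy hν hv hσ, isDenseMap_homOfStrategy hν hσ hE,
      fun x y => mem_of_fStarVal_homOfStrategy hν hv hσ hwin⟩
  · rintro ⟨f, hf, hd, hA⟩
    exact winIStrat_of_dense hreg hv hf hd hA

end
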